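/- Any typing derivation in the unrestricted intersection type system (types built freely from atoms with → and ∧) can be transformed into a typing derivation in the restricted system where ∧ never occurs immediately to the right of an arrow, assigning a correspondingly translated type to the same term. -/
import Mathlib


/-- Untyped λ-terms in de Bruijn representation. -/
inductive Term : Type
  | var : ℕ → Term
  | lam : Term → Term
  | app : Term → Term → Term
  deriving DecidableEq

namespace Term

/-- Shift (lift) all de Bruijn indices ≥ d by one. -/
def lift (d : ℕ) : Term → Term
  | var n => var (if n < d then n else n + 1)
  | lam t => lam (lift (d + 1) t)
  | app t u => app (lift d t) (lift d u)

/-- Capture-avoiding substitution `t[k := u]` (de Bruijn style). -/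
def subst : Term → ℕ → Term → Term
  | var n, k, u => if n = k then u else var (if n < k then n else n - 1)
  | lam t, k, u => lam (subst t (k + 1) (lift 0 u))
  | app t v, k, u => app (subst t k u) (subst v k u)

/-- Swap the de Bruijn indices d and d+1 (exchange of two adjacent binders). -/
def swap (d : ℕ) : Term → Term
  | var n => var (if n = d then d + 1 else if n = d + 1 then d else n)
  | lam t => lam (swap (d + 1) t)
  | app t u => app (swap d t) (swap d u)

end Term

/-- The four reduction rules. -/
inductive Rule | beta | delta | gamma | assoc

/-- One-step reduction by a given rule (closed under congruence).
β: (λx.M N) ▷ M[x:=N];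
δ: (λy.λx.M N) ▷ λx.(λy.M N), x ∉ FV(N);
γ: (λx.M N P) ▷ (λx.(M P) N), x ∉ FV(P);
assoc: (M (λx.N P)) ▷ (λx.(M N) P), x ∉ FV(M).
Freshness conditions are realized by lifting. -/
inductive Step : Rule → Term → Term → Prop
  | beta (M N) : Step .beta (.app (.lam M) N) (Term.subst M 0 N)
  | delta (M N) : Step .delta (.app (.lam (.lam M)) N)
      (.lam (.app (.lam (Term.swap 0 M)) (Term.lift 0 N)))
  | gamma (M N P) : Step .gamma (.app (.app (.lam M) N) P)
      (.app (.lam (.app M (Term.lift 0 P))) N)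
  | assoc (M N P) : Step .assoc (.app M (.app (.lam N) P))
      (.app (.lam (.app (Term.lift 0 M) N)) P)
  | appCongL {r t t'} (u) : Step r t t' → Step r (.app t u) (.app t' u)
  | appCongR {r u u'} (t) : Step r u u' → Step r (.app t u) (.app t u')
  | lamCong {r t t'} : Step r t t' → Step r (.lam t) (.lam t')

/-- One-step reduction by the union of the four rules. -/
def StepAll (t t' : Term) : Prop := ∃ r, Step r t t'

/-- Strong normalization for the union of β, δ, γ, assoc. -/
def SN (t : Term) : Prop := Acc (fun a b => StepAll b a) t

/-- Strong normalization for β alone. -/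
def SNbeta (t : Term) : Prop := Acc (fun a b => Step .beta b a) t

mutual
/-- Simple types: atoms and arrows with simple codomain. -/
inductive STy : Type
  | atom : ℕ → STy
  | arrow : Ty → STy → STy
/-- Types of system D: intersections of simple types. -/
inductive Ty : Type
  | simple : STy → Ty
  | inter : STy → Ty → Ty
end

/-- Typing judgment of system D (contexts are lists of types, de Bruijn). -/
inductive Typing : List Ty → Term → Ty → Prop
  | var {Γ n A} : Γ[n]? = some A → Typing Γ (.var n) A
  | app {Γ M N A B} : Typing Γ M (.simple (.arrow A B)) → Typing Γ N A →
      Typing Γ (.app M N) (.simple B)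
  | lam {Γ M A B} : Typing (A :: Γ) M (.simple B) →
      Typing Γ (.lam M) (.simple (.arrow A B))
  | interI {Γ M A B} : Typing Γ M (.simple A) → Typing Γ M B →
      Typing Γ M (.inter A B)
  | interE1 {Γ M A B} : Typing Γ M (.inter A B) → Typing Γ M (.simple A)
  | interE2 {Γ M A B} : Typing Γ M (.inter A B) → Typing Γ M B

/-- A term is typable in system D. -/
def Typable (t : Term) : Prop := ∃ Γ A, Typing Γ t A

/-- (H M₁ ... Mₙ). -/
def appList (H : Term) (Ms : List Term) : Term := Ms.foldl .app H

/-- Unrestricted intersection types. -/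
inductive UTy : Type
  | atom : ℕ → UTy
  | arrow : UTy → UTy → UTy
  | inter : UTy → UTy → UTy

/-- Typing in the unrestricted intersection type system. -/
inductive UTyping : List UTy → Term → UTy → Prop
  | var {Γ n A} : Γ[n]? = some A → UTyping Γ (.var n) A
  | app {Γ M N A B} : UTyping Γ M (.arrow A B) → UTyping Γ N A →
      UTyping Γ (.app M N) B
  | lam {Γ M A B} : UTyping (A :: Γ) M B → UTyping Γ (.lam M) (.arrow A B)
  | interI {Γ M A B} : UTyping Γ M A → UTyping Γ M B → UTyping Γ M (.inter A B)
  | interE1 {Γ M A B} : UTyping Γ M (.inter A B) → UTyping Γ M A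
  | interE2 {Γ M A B} : UTyping Γ M (.inter A B) → UTyping Γ M B

/-- Intersection of two restricted types. -/
def andTy : Ty → Ty → Ty
  | .simple s, u => .inter s u
  | .inter s t, u => .inter s (andTy t u)

/-- Distribute an arrow over an intersection: A → (B ∧ C) becomes (A→B) ∧ (A→C). -/
def arrTy (A : Ty) : Ty → Ty
  | .simple s => .simple (.arrow A s)
  | .inter s t => .inter (.arrow A s) (arrTy A t)

/-- Translation of unrestricted types into restricted ones. -/
def trTy : UTy → Ty
  | .atom n => .simple (.atom n)
  | .arrow A B => arrTy (trTy A) (trTy B)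
  | .inter A B => andTy (trTy A) (trTy B)

lemma andI {Γ M} : ∀ {A B}, Typing Γ M A → Typing Γ M B → Typing Γ M (andTy A B)
  | .simple _, _, hA, hB => .interI hA hB
  | .inter _ _, _, hA, hB => .interI (.interE1 hA) (andI (.interE2 hA) hB)

lemma andE1 {Γ M} : ∀ {A B}, Typing Γ M (andTy A B) → Typing Γ M A
  | .simple _, _, h => .interE1 h
  | .inter _ _, _, h => .interI (.interE1 h) (andE1 (.interE2 h))

lemma andE2 {Γ M} : ∀ {A B}, Typing Γ M (andTy A B) → Typing Γ M B
  | .simple _, _, h => .interE2 h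
  | .inter _ _, _, h => andE2 (.interE2 h)

lemma arrI {Γ M A} : ∀ {B}, Typing (A :: Γ) M B → Typing Γ (.lam M) (arrTy A B)
  | .simple _, h => .lam h
  | .inter _ _, h => .interI (.lam (.interE1 h)) (arrI (.interE2 h))

lemma arrE {Γ M N A} (hN : Typing Γ N A) :
    ∀ {B}, Typing Γ M (arrTy A B) → Typing Γ (.app M N) B
  | .simple _, hM => .app hM hN
  | .inter _ _, hM => .interI (.app (.interE1 hM) hN) (arrE hN (.interE2 hM))

/-- Any derivation in the unrestricted system yields a derivation in the
restricted system for the translated judgment. -/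
theorem restrict_typing (Γ : List UTy) (t : Term) (A : UTy)
    (h : UTyping Γ t A) : Typing (Γ.map trTy) t (trTy A) := by
  induction h with
  | var h => exact .var (by simp [List.getElem?_map, h])
  | app _ _ ihM ihN => exact arrE ihN ihM
  | lam _ ih => exact arrI ih
  | interI _ _ ihA ihB => exact andI ihA ihB
  | interE1 _ ih => exact andE1 ih
  | interE2 _ ih => exact andE2 ih
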